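/- Let (X, μ) be a finite measure space and H a complex Hilbert space. For every μ-continuous POVM φ on X with values in effects on H, there exists a unique linear map ψ : L∞(X, μ; ℂ) → B(H) that is positive (maps μ-a.e. nonnegative real functions to positive operators), unital (ψ(1) = id), normal (for every uniformly bounded sequence of real-valued functions (f n) increasing μ-a.e. and converging μ-a.e. to f, ψ(f n) → ψ(f) in the weak operator topology), and satisfies ψ(1_M) = φ(M) for every measurable M ⊆ X. -/

import Mathlib

open MeasureTheory Filter Topology
open scoped ComplexInnerProductSpace ComplexOrder ENNReal

universe u v

noncomputable section

/-- An operator `A` on a complex Hilbert space is positive if `⟪A ψ, ψ⟫` is real and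
nonnegative for every vector `ψ` (expressed via the order on `ℂ`). -/
def IsPositiveOp {H : Type*} [NormedAddCommGroup H] [InnerProductSpace ℂ H]
    (A : H →L[ℂ] H) : Prop :=
  ∀ ψ : H, (0 : ℂ) ≤ ⟪A ψ, ψ⟫

/-- An effect is an operator `A` with both `A` and `id - A` positive. -/
def IsEffect {H : Type*} [NormedAddCommGroup H] [InnerProductSpace ℂ H]
    (A : H →L[ℂ] H) : Prop :=
  IsPositiveOp A ∧ IsPositiveOp (1 - A)

/-- A POVM on a measurable space `X` with values in the effects on `H`. -/
def IsPOVM {X : Type*} [MeasurableSpace X] {H : Type*} [NormedAddCommGroup H]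
    [InnerProductSpace ℂ H] (φ : ∀ M : Set X, MeasurableSet M → (H →L[ℂ] H)) : Prop :=
  (∀ (M : Set X) (hM : MeasurableSet M), IsEffect (φ M hM)) ∧
  φ Set.univ MeasurableSet.univ = 1 ∧
  ∀ (M : ℕ → Set X) (hM : ∀ n, MeasurableSet (M n)),
    Pairwise (Function.onFun Disjoint M) →
    ∀ ψ : H, ⟪φ (⋃ n, M n) (MeasurableSet.iUnion hM) ψ, ψ⟫ = ∑' n, ⟪φ (M n) (hM n) ψ, ψ⟫

/-- Convergence of a sequence of operators in the weak operator topology. -/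
def WOTTendsto {H : Type*} [NormedAddCommGroup H] [InnerProductSpace ℂ H]
    (T : ℕ → H →L[ℂ] H) (L : H →L[ℂ] H) : Prop :=
  ∀ ψ χ : H, Tendsto (fun n => ⟪T n ψ, χ⟫) atTop (𝓝 ⟪L ψ, χ⟫)

/-- A linear map `L∞(X,μ;ℂ) → B(H)` is positive if it maps μ-a.e. nonnegative (real-valued)
functions to positive operators. -/
def IsPositiveLinfMap {X : Type*} [MeasurableSpace X] {μ : Measure X} {H : Type*}
    [NormedAddCommGroup H] [InnerProductSpace ℂ H]
    (ψ : Lp ℂ ∞ μ →ₗ[ℂ] (H →L[ℂ] H)) : Prop :=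
  ∀ f : Lp ℂ ∞ μ, (∀ᵐ x ∂μ, (0 : ℂ) ≤ f x) → IsPositiveOp (ψ f)

/-- A linear map `L∞(X,μ;ℂ) → B(H)` is normal if for every uniformly bounded sequence of
real-valued functions increasing μ-a.e. and converging μ-a.e., the images converge in the
weak operator topology. -/
def IsNormalLinfMap {X : Type*} [MeasurableSpace X] {μ : Measure X} {H : Type*}
    [NormedAddCommGroup H] [InnerProductSpace ℂ H]
    (ψ : Lp ℂ ∞ μ →ₗ[ℂ] (H →L[ℂ] H)) : Prop :=
  ∀ (f : ℕ → Lp ℂ ∞ μ) (g : Lp ℂ ∞ μ) (C : ℝ),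
    (∀ n, ∀ᵐ x ∂μ, (f n x).im = 0 ∧ ‖f n x‖ ≤ C) →
    (∀ᵐ x ∂μ, ∀ n, (f n x).re ≤ (f (n + 1) x).re) →
    (∀ᵐ x ∂μ, Tendsto (fun n => f n x) atTop (𝓝 (g x))) →
    WOTTendsto (fun n => ψ (f n)) (ψ g)

/-!
For each vector `z`, `M ↦ ⟪φ M z, z⟫` is a finite measure `ν z ≪ μ` of total mass `‖z‖²`, so
every `F ∈ L∞(μ)` defines a form `q F z = ∫ F dν z` with `‖q F z‖ ≤ ‖F‖ ‖z‖²`. For a simple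
function `F = ∑ cᵢ 1_{Mᵢ}` this is `⟪z, T z⟫` with `T = ∑ cᵢ φ Mᵢ` (we use `⟪z, T z⟫`, which is
`ℂ`-linear in `T`). A general `F` is a bounded a.e. limit of simple functions, so by dominated
convergence `q F` is a pointwise limit of such forms; its polarization is then a bounded
sesquilinear form, hence by Riesz `q F z = ⟪z, ψ F z⟫` for a unique operator `ψ F`. Positivity
and normality of `ψ` are positivity and dominated convergence of the integrals.

Uniqueness: bounded real functions are increasing limits of simple functions and every `F` is
`re F + i im F`, so a normal linear map is determined by its values on indicators.
-/

section Polarization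

variable {H : Type*} [NormedAddCommGroup H] [InnerProductSpace ℂ H]

def polarization (q : H → ℂ) (x y : H) : ℂ :=
  (q (x + y) - q (x - y) - Complex.I * q (x + Complex.I • y)
    + Complex.I * q (x - Complex.I • y)) / 4

theorem polarization_inner_self (T : H →L[ℂ] H) (x y : H) :
    polarization (fun z => ⟪z, T z⟫) x y = ⟪x, T y⟫ := by
  simp only [polarization, map_add, map_sub, map_smul, inner_add_left, inner_add_right,
    inner_sub_left, inner_sub_right, inner_smul_left, inner_smul_right, Complex.conj_I]
  ring_nf
  simp only [Complex.I_sq]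
  ring

theorem tendsto_polarization {ι : Type*} {l : Filter ι} {q : ι → H → ℂ} {q₀ : H → ℂ}
    (h : ∀ z, Tendsto (fun i => q i z) l (𝓝 (q₀ z))) (x y : H) :
    Tendsto (fun i => polarization (q i) x y) l (𝓝 (polarization q₀ x y)) :=
  ((((h _).sub (h _)).sub ((h _).const_mul _)).add ((h _).const_mul _)).div_const 4

theorem norm_polarization_le {q : H → ℂ} {C : ℝ} (hq : ∀ z, ‖q z‖ ≤ C * ‖z‖ ^ 2) (x y : H) :
    ‖polarization q x y‖ ≤ C * (‖x‖ ^ 2 + ‖y‖ ^ 2) := by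
  have hIy : ‖Complex.I • y‖ = ‖y‖ := by rw [norm_smul, Complex.norm_I, one_mul]
  have h₁ := parallelogram_law_with_norm ℂ x y
  have h₂ := parallelogram_law_with_norm ℂ x (Complex.I • y)
  rw [hIy] at h₂
  have h₃ : ‖polarization q x y‖ ≤ (‖q (x + y)‖ + ‖q (x - y)‖ + ‖q (x + Complex.I • y)‖
      + ‖q (x - Complex.I • y)‖) / 4 := by
    rw [polarization, norm_div, Complex.norm_ofNat]
    gcongr
    refine (norm_add_le _ _).trans ?_
    refine (add_le_add_left (norm_sub_le _ _) _).trans ?_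
    refine (add_le_add_left (add_le_add_left (norm_sub_le _ _) _) _).trans ?_
    simp only [norm_mul, Complex.norm_I, one_mul]
    linarith
  have h₄ : (C * ‖x + y‖ ^ 2 + C * ‖x - y‖ ^ 2 + C * ‖x + Complex.I • y‖ ^ 2
      + C * ‖x - Complex.I • y‖ ^ 2) / 4 = C * (‖x‖ ^ 2 + ‖y‖ ^ 2) := by
    linear_combination (C / 4) * h₁ + (C / 4) * h₂
  linarith [hq (x + y), hq (x - y), hq (x + Complex.I • y), hq (x - Complex.I • y)]

end Polarization

section SesqForm

theorem norm_sesqForm_le_of_le_sq_add_sq {E : Type*} [NormedAddCommGroup E] [NormedSpace ℂ E]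
    (B : E →ₗ⋆[ℂ] E →ₗ[ℂ] ℂ) {C : ℝ} (hB : ∀ x y, ‖B x y‖ ≤ C * (‖x‖ ^ 2 + ‖y‖ ^ 2))
    (x y : E) : ‖B x y‖ ≤ 2 * C * ‖x‖ * ‖y‖ := by
  rcases eq_or_ne x 0 with rfl | hx
  · simp
  rcases eq_or_ne y 0 with rfl | hy
  · simp
  have hx' := norm_pos_iff.mpr hx
  have hy' := norm_pos_iff.mpr hy
  set t := Real.sqrt (‖y‖ / ‖x‖)
  have ht : 0 < t := Real.sqrt_pos.mpr (div_pos hy' hx')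
  have ht2 : t ^ 2 = ‖y‖ / ‖x‖ := Real.sq_sqrt (div_pos hy' hx').le
  have hscale : B ((t : ℂ) • x) (((t⁻¹ : ℝ) : ℂ) • y) = B x y := by
    rw [map_smulₛₗ, map_smulₛₗ, LinearMap.smul_apply, smul_smul, Complex.conj_ofReal,
      RingHom.id_apply, ← Complex.ofReal_mul, inv_mul_cancel₀ ht.ne', Complex.ofReal_one, one_smul]
  calc ‖B x y‖ = ‖B ((t : ℂ) • x) (((t⁻¹ : ℝ) : ℂ) • y)‖ := by rw [hscale]
    _ ≤ C * (‖(t : ℂ) • x‖ ^ 2 + ‖((t⁻¹ : ℝ) : ℂ) • y‖ ^ 2) := hB _ _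
    _ = C * (t ^ 2 * ‖x‖ ^ 2 + ‖y‖ ^ 2 / t ^ 2) := by
      rw [norm_smul, norm_smul, Complex.norm_real, Complex.norm_real, Real.norm_of_nonneg ht.le,
        Real.norm_of_nonneg (inv_nonneg.mpr ht.le)]
      ring
    _ = 2 * C * ‖x‖ * ‖y‖ := by
      rw [ht2]
      field_simp
      ring

variable {H : Type*} [NormedAddCommGroup H] [InnerProductSpace ℂ H]

theorem exists_sesqForm_of_tendsto_inner {T : ℕ → H →L[ℂ] H} {B : H → H → ℂ}
    (hB : ∀ x y, Tendsto (fun n => ⟪x, T n y⟫) atTop (𝓝 (B x y))) :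
    ∃ S : H →ₗ⋆[ℂ] H →ₗ[ℂ] ℂ, ∀ x y, S x y = B x y :=
  ⟨LinearMap.mk₂'ₛₗ (starRingEnd ℂ) (RingHom.id ℂ) B
    (fun x x' y => tendsto_nhds_unique (hB _ _) <| by
      simpa only [inner_add_left] using (hB x y).add (hB x' y))
    (fun c x y => tendsto_nhds_unique (hB _ _) <| by
      simpa only [inner_smul_left, smul_eq_mul] using (hB x y).const_mul _)
    (fun x y y' => tendsto_nhds_unique (hB _ _) <| by
      simpa only [map_add, inner_add_right] using (hB x y).add (hB x y'))
    (fun c x y => tendsto_nhds_unique (hB _ _) <| by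
      simpa only [map_smul, inner_smul_right, smul_eq_mul, RingHom.id_apply] using
        (hB x y).const_mul c),
    fun _ _ => rfl⟩

theorem exists_inner_self_eq_of_tendsto [CompleteSpace H] {T : ℕ → H →L[ℂ] H} {q : H → ℂ}
    {C : ℝ} (hT : ∀ z, Tendsto (fun n => ⟪z, T n z⟫) atTop (𝓝 (q z)))
    (hq : ∀ z, ‖q z‖ ≤ C * ‖z‖ ^ 2) :
    ∃ A : H →L[ℂ] H, ∀ z, ⟪z, A z⟫ = q z := by
  have hB (x y : H) : Tendsto (fun n => ⟪x, T n y⟫) atTop (𝓝 (polarization q x y)) := by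
    simpa only [polarization_inner_self] using tendsto_polarization hT x y
  obtain ⟨S, hS⟩ := exists_sesqForm_of_tendsto_inner hB
  have hSle := norm_sesqForm_le_of_le_sq_add_sq S fun x y => hS x y ▸ norm_polarization_le hq x y
  refine ⟨ContinuousLinearMap.adjoint
    (InnerProductSpace.continuousLinearMapOfBilin (S.mkContinuous₂ _ hSle)), fun z => ?_⟩
  rw [ContinuousLinearMap.adjoint_inner_right, InnerProductSpace.continuousLinearMapOfBilin_apply,
    LinearMap.mkContinuous₂_apply, hS]
  exact tendsto_nhds_unique (hB z z) (hT z)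

theorem ContinuousLinearMap.ext_inner_self {A B : H →L[ℂ] H} (h : ∀ z, ⟪z, A z⟫ = ⟪z, B z⟫) :
    A = B := by
  refine ContinuousLinearMap.coe_injective ((ext_inner_map _ _).mp fun z => ?_)
  rw [ContinuousLinearMap.coe_coe, ContinuousLinearMap.coe_coe, ← inner_conj_symm, h,
    inner_conj_symm]

end SesqForm

section Linfty

variable {X : Type*} [MeasurableSpace X] {μ : Measure X}

theorem MeasureTheory.Lp.ae_norm_le_norm {E : Type*} [NormedAddCommGroup E] (F : Lp E ∞ μ) :
    ∀ᵐ x ∂μ, ‖F x‖ ≤ ‖F‖ := by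
  filter_upwards [ae_le_eLpNormEssSup (f := F)] with x hx
  rw [Lp.norm_def, eLpNorm_exponent_top, ← toReal_enorm]
  exact ENNReal.toReal_mono (by simpa using Lp.eLpNorm_ne_top F) hx

theorem MeasureTheory.SimpleFunc.exists_monotone_tendsto_ae {u : X → ℝ} (hu : Measurable u)
    {C : ℝ} (hC : ∀ᵐ x ∂μ, |u x| ≤ C) :
    ∃ s : ℕ → SimpleFunc X ℝ, Monotone s ∧
      ∀ᵐ x ∂μ, (∀ n, |s n x| ≤ C) ∧ Tendsto (fun n => s n x) atTop (𝓝 (u x)) := by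
  set e := eapprox (fun x => ENNReal.ofReal (u x + C))
  have hmono (x : X) : Monotone fun n => (e n x).toReal - C := fun m n hmn =>
    sub_le_sub_right (ENNReal.toReal_mono (eapprox_lt_top _ n x).ne (monotone_eapprox _ hmn x)) C
  refine ⟨fun n => (e n).map fun a : ℝ≥0∞ => a.toReal - C, fun m n hmn x => hmono x hmn, ?_⟩
  filter_upwards [hC] with x hx
  have hlim : Tendsto (fun n => (e n x).toReal - C) atTop (𝓝 (u x)) := by
    have h := ((ENNReal.tendsto_toReal ENNReal.ofReal_ne_top).comp
      (tendsto_eapprox (hu.add_const C).ennreal_ofReal x)).sub_const C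
    rwa [ENNReal.toReal_ofReal (by linarith [neg_abs_le (u x)]), add_sub_cancel_right] at h
  refine ⟨fun n => abs_le.mpr ⟨by simp, ?_⟩, hlim⟩
  exact ((hmono x).ge_of_tendsto hlim n).trans ((le_abs_self _).trans hx)

theorem MeasureTheory.Lp.exists_eq_add_I_smul (F : Lp ℂ ∞ μ) :
    ∃ F₁ F₂ : Lp ℂ ∞ μ, (∀ᵐ x ∂μ, (F₁ x).im = 0) ∧ (∀ᵐ x ∂μ, (F₂ x).im = 0) ∧
      F = F₁ + Complex.I • F₂ := by
  have h₁ := (Lp.memLp F).re.ofReal (K := ℂ)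
  have h₂ := (Lp.memLp F).im.ofReal (K := ℂ)
  refine ⟨h₁.toLp _, h₂.toLp _, ?_, ?_, ?_⟩
  · filter_upwards [h₁.coeFn_toLp] with x hx
    rw [hx]; simp
  · filter_upwards [h₂.coeFn_toLp] with x hx
    rw [hx]; simp
  · refine Lp.ext ?_
    filter_upwards [h₁.coeFn_toLp, h₂.coeFn_toLp, Lp.coeFn_add (h₁.toLp _) (Complex.I • h₂.toLp _),
      Lp.coeFn_smul Complex.I (h₂.toLp _)] with x hx₁ hx₂ hadd hsmul
    rw [hadd, Pi.add_apply, hsmul, Pi.smul_apply, hx₁, hx₂, smul_eq_mul, mul_comm]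
    exact (Complex.re_add_im (F x)).symm

theorem LinearMap.eq_on_simpleFunc_of_eq_on_indicatorConstLp [IsFiniteMeasure μ]
    {E : Type*} [AddCommGroup E] [Module ℂ E] {ψ₁ ψ₂ : Lp ℂ ∞ μ →ₗ[ℂ] E}
    (h : ∀ (M : Set X) (hM : MeasurableSet M),
      ψ₁ (indicatorConstLp ∞ hM (measure_ne_top μ M) 1) =
        ψ₂ (indicatorConstLp ∞ hM (measure_ne_top μ M) 1))
    (s : SimpleFunc X ℂ) :
    ψ₁ ((s.memLp_top μ).toLp s) = ψ₂ ((s.memLp_top μ).toLp s) := by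
  induction s using SimpleFunc.induction with
  | @const c M hM =>
    set s := SimpleFunc.piecewise M hM (.const X c) (.const X (0 : ℂ))
    have hs : (s.memLp_top μ).toLp s = c • indicatorConstLp ∞ hM (measure_ne_top μ M) 1 := by
      refine Lp.ext ?_
      filter_upwards [(s.memLp_top μ).coeFn_toLp,
        Lp.coeFn_smul c (indicatorConstLp ∞ hM (measure_ne_top μ M) (1 : ℂ)),
        (indicatorConstLp_coeFn : indicatorConstLp ∞ hM (measure_ne_top μ M) (1 : ℂ) =ᵐ[μ] _)]
        with x h₁ h₂ h₃
      rw [h₁, h₂, Pi.smul_apply, h₃]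
      by_cases hx : x ∈ M <;> simp [s, hx]
    rw [hs, map_smul, map_smul, h]
  | @add f g _ hf hg =>
    have : ((f + g).memLp_top μ).toLp _ = (f.memLp_top μ).toLp f + (g.memLp_top μ).toLp g :=
      MemLp.toLp_add _ _
    rw [this, map_add, map_add, hf, hg]

end Linfty

namespace IsPOVM

variable {X : Type*} [MeasurableSpace X] {H : Type*} [NormedAddCommGroup H]
  [InnerProductSpace ℂ H] {φ : ∀ M : Set X, MeasurableSet M → (H →L[ℂ] H)}

theorem inner_nonneg (hφ : IsPOVM φ) (M : Set X) (hM : MeasurableSet M) (z : H) :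
    0 ≤ ⟪φ M hM z, z⟫ :=
  (hφ.1 M hM).1 z

theorem ofReal_re_inner (hφ : IsPOVM φ) (M : Set X) (hM : MeasurableSet M) (z : H) :
    ((⟪φ M hM z, z⟫.re : ℝ) : ℂ) = ⟪φ M hM z, z⟫ :=
  Complex.ext (by simp) (by simp [← (Complex.nonneg_iff.mp (hφ.inner_nonneg M hM z)).2])

theorem re_inner_le (hφ : IsPOVM φ) (M : Set X) (hM : MeasurableSet M) (z : H) :
    ⟪φ M hM z, z⟫.re ≤ ‖z‖ ^ 2 := by
  have h := (Complex.nonneg_iff.mp ((hφ.1 M hM).2 z)).1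
  simpa [inner_sub_left, inner_self_eq_norm_sq_to_K, ← Complex.ofReal_pow] using h

theorem inner_empty (hφ : IsPOVM φ) (z : H) : ⟪φ ∅ MeasurableSet.empty z, z⟫ = 0 := by
  have h := hφ.2.2 (fun _ => ∅) (fun _ => MeasurableSet.empty) (fun _ _ _ => disjoint_bot_left) z
  simpa only [Set.iUnion_empty, tsum_const, Nat.card_eq_zero_of_infinite, zero_smul] using h

theorem re_inner_nonneg (hφ : IsPOVM φ) (M : Set X) (hM : MeasurableSet M) (z : H) :
    0 ≤ ⟪φ M hM z, z⟫.re :=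
  (Complex.nonneg_iff.mp (hφ.inner_nonneg M hM z)).1

theorem sum_range_re_inner_le (hφ : IsPOVM φ) {M : ℕ → Set X} (hM : ∀ n, MeasurableSet (M n))
    (hd : Pairwise (Function.onFun Disjoint M)) (z : H) (N : ℕ) :
    ∑ n ∈ Finset.range N, ⟪φ (M n) (hM n) z, z⟫.re ≤ ‖z‖ ^ 2 := by
  set M' : ℕ → Set X := fun n => if n < N then M n else ∅
  have hM' (n : ℕ) : MeasurableSet (M' n) := by
    simp only [M']; split_ifs; exacts [hM n, .empty]
  have hd' : Pairwise (Function.onFun Disjoint M') := fun i j hij => by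
    simp only [M', Function.onFun]; split_ifs <;> simp [hd hij]
  have key : ∑ n ∈ Finset.range N, ⟪φ (M n) (hM n) z, z⟫ = ⟪φ (⋃ n, M' n) (.iUnion hM') z, z⟫ := by
    rw [hφ.2.2 M' hM' hd' z, tsum_eq_sum (s := Finset.range N)]
    · exact Finset.sum_congr rfl fun n hn => by simp [M', Finset.mem_range.mp hn]
    · intro n hn
      simp [M', Finset.mem_range.not.mp hn, hφ.inner_empty]
  rw [← Complex.re_sum, key]
  exact hφ.re_inner_le _ _ z

theorem ofReal_re_inner_iUnion (hφ : IsPOVM φ) {M : ℕ → Set X} (hM : ∀ n, MeasurableSet (M n))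
    (hd : Pairwise (Function.onFun Disjoint M)) (z : H) :
    ENNReal.ofReal ⟪φ (⋃ n, M n) (.iUnion hM) z, z⟫.re
      = ∑' n, ENNReal.ofReal ⟪φ (M n) (hM n) z, z⟫.re := by
  have hsum : Summable fun n => ⟪φ (M n) (hM n) z, z⟫.re :=
    summable_of_sum_range_le (fun n => hφ.re_inner_nonneg _ _ z) (hφ.sum_range_re_inner_le hM hd z)
  have hsumC : Summable fun n => ⟪φ (M n) (hM n) z, z⟫ := by
    simpa only [hφ.ofReal_re_inner] using Complex.summable_ofReal.mpr hsum
  rw [hφ.2.2 M hM hd z, Complex.re_tsum hsumC,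
    ENNReal.ofReal_tsum_of_nonneg (fun n => hφ.re_inner_nonneg _ _ z) hsum]

def measure (hφ : IsPOVM φ) (z : H) : Measure X :=
  Measure.ofMeasurable (fun M hM => ENNReal.ofReal ⟪φ M hM z, z⟫.re) (by simp [hφ.inner_empty])
    fun _ hM hd => hφ.ofReal_re_inner_iUnion hM hd z

theorem measure_apply (hφ : IsPOVM φ) (z : H) {M : Set X} (hM : MeasurableSet M) :
    hφ.measure z M = ENNReal.ofReal ⟪φ M hM z, z⟫.re :=
  Measure.ofMeasurable_apply M hM

theorem ofReal_measureReal (hφ : IsPOVM φ) (z : H) {M : Set X} (hM : MeasurableSet M) :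
    ((hφ.measure z).real M : ℂ) = ⟪φ M hM z, z⟫ := by
  rw [measureReal_def, hφ.measure_apply z hM, ENNReal.toReal_ofReal (hφ.re_inner_nonneg M hM z),
    hφ.ofReal_re_inner]

theorem measureReal_univ (hφ : IsPOVM φ) (z : H) : (hφ.measure z).real Set.univ = ‖z‖ ^ 2 := by
  rw [← Complex.ofReal_inj, hφ.ofReal_measureReal z .univ, hφ.2.1]
  simp [inner_self_eq_norm_sq_to_K]

instance (hφ : IsPOVM φ) (z : H) : IsFiniteMeasure (hφ.measure z) :=
  ⟨by rw [hφ.measure_apply z .univ]; exact ENNReal.ofReal_lt_top⟩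

theorem measure_absolutelyContinuous (hφ : IsPOVM φ) {μ : Measure X}
    (hcont : ∀ (M : Set X) (hM : MeasurableSet M), μ M = 0 → φ M hM = 0) (z : H) :
    hφ.measure z ≪ μ :=
  Measure.AbsolutelyContinuous.mk fun M hM h0 => by simp [hφ.measure_apply z hM, hcont M hM h0]

theorem inner_comm (hφ : IsPOVM φ) (M : Set X) (hM : MeasurableSet M) (z : H) :
    ⟪z, φ M hM z⟫ = ⟪φ M hM z, z⟫ := by
  rw [← inner_conj_symm, ← hφ.ofReal_re_inner, Complex.conj_ofReal]

def quadForm (hφ : IsPOVM φ) (f : X → ℂ) (z : H) : ℂ :=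
  ∫ x, f x ∂hφ.measure z

theorem exists_inner_self_eq_quadForm_simpleFunc (hφ : IsPOVM φ) (s : SimpleFunc X ℂ) :
    ∃ T : H →L[ℂ] H, ∀ z, ⟪z, T z⟫ = hφ.quadForm s z := by
  refine ⟨∑ c ∈ s.range, c • φ (s ⁻¹' {c}) (s.measurableSet_preimage _), fun z => ?_⟩
  rw [quadForm, ← SimpleFunc.integral_eq_integral _ (s.integrable_of_isFiniteMeasure),
    SimpleFunc.integral_eq]
  simp only [sum_apply, smul_apply, inner_sum, inner_smul_right, hφ.inner_comm,
    ← hφ.ofReal_measureReal, Complex.real_smul, mul_comm]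

theorem quadForm_indicator (hφ : IsPOVM φ) {M : Set X} (hM : MeasurableSet M) (z : H) :
    hφ.quadForm (M.indicator fun _ => 1) z = ⟪z, φ M hM z⟫ := by
  rw [quadForm, integral_indicator_const _ hM, hφ.inner_comm, ← hφ.ofReal_measureReal z hM,
    Complex.real_smul, mul_one]

variable {μ : Measure X} (hφ : IsPOVM φ)
  (hcont : ∀ (M : Set X) (hM : MeasurableSet M), μ M = 0 → φ M hM = 0)
include hcont

theorem quadForm_congr_ae {f g : X → ℂ} (h : f =ᵐ[μ] g) (z : H) :
    hφ.quadForm f z = hφ.quadForm g z :=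
  integral_congr_ae (hφ.measure_absolutelyContinuous hcont z h)

theorem integrable_of_ae_norm_le {f : X → ℂ} {C : ℝ} (hf : AEStronglyMeasurable f μ)
    (hb : ∀ᵐ x ∂μ, ‖f x‖ ≤ C) (z : H) : Integrable f (hφ.measure z) :=
  (integrable_const C).mono' (hf.mono_ac (hφ.measure_absolutelyContinuous hcont z))
    (hφ.measure_absolutelyContinuous hcont z hb)

theorem norm_quadForm_le {f : X → ℂ} {C : ℝ} (hb : ∀ᵐ x ∂μ, ‖f x‖ ≤ C) (z : H) :
    ‖hφ.quadForm f z‖ ≤ C * ‖z‖ ^ 2 := by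
  simpa only [quadForm, hφ.measureReal_univ] using
    norm_integral_le_of_norm_le_const (hφ.measure_absolutelyContinuous hcont z hb)

theorem tendsto_quadForm {f : ℕ → X → ℂ} {g : X → ℂ} {C : ℝ}
    (hf : ∀ n, AEStronglyMeasurable (f n) μ) (hb : ∀ n, ∀ᵐ x ∂μ, ‖f n x‖ ≤ C)
    (hlim : ∀ᵐ x ∂μ, Tendsto (fun n => f n x) atTop (𝓝 (g x))) (z : H) :
    Tendsto (fun n => hφ.quadForm (f n) z) atTop (𝓝 (hφ.quadForm g z)) :=
  tendsto_integral_of_dominated_convergence (fun _ => C)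
    (fun n => (hf n).mono_ac (hφ.measure_absolutelyContinuous hcont z)) (integrable_const C)
    (fun n => hφ.measure_absolutelyContinuous hcont z (hb n))
    (hφ.measure_absolutelyContinuous hcont z hlim)

theorem quadForm_add (F G : Lp ℂ ∞ μ) (z : H) :
    hφ.quadForm ⇑(F + G) z = hφ.quadForm F z + hφ.quadForm G z := by
  rw [hφ.quadForm_congr_ae hcont (Lp.coeFn_add F G)]
  exact integral_add
    (hφ.integrable_of_ae_norm_le hcont (Lp.aestronglyMeasurable F) (Lp.ae_norm_le_norm F) z)
    (hφ.integrable_of_ae_norm_le hcont (Lp.aestronglyMeasurable G) (Lp.ae_norm_le_norm G) z)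

theorem quadForm_smul (c : ℂ) (F : Lp ℂ ∞ μ) (z : H) :
    hφ.quadForm ⇑(c • F) z = c * hφ.quadForm F z := by
  rw [hφ.quadForm_congr_ae hcont (Lp.coeFn_smul c F)]
  exact integral_const_mul c _

theorem exists_tendsto_inner_self_quadForm (F : Lp ℂ ∞ μ) :
    ∃ T : ℕ → H →L[ℂ] H, ∀ z, Tendsto (fun n => ⟪z, T n z⟫) atTop (𝓝 (hφ.quadForm F z)) := by
  have hg := (Lp.aestronglyMeasurable F).stronglyMeasurable_mk
  have hFg := (Lp.aestronglyMeasurable F).ae_eq_mk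
  have hgF : ∀ᵐ x ∂μ, ‖(Lp.aestronglyMeasurable F).mk F x‖ ≤ ‖F‖ := by
    filter_upwards [hFg, Lp.ae_norm_le_norm F] with x h₁ h₂
    rwa [← h₁]
  choose T hT using fun n => hφ.exists_inner_self_eq_quadForm_simpleFunc (hg.approxBounded ‖F‖ n)
  refine ⟨T, fun z => ?_⟩
  simp only [hT, hφ.quadForm_congr_ae hcont hFg]
  exact hφ.tendsto_quadForm hcont (fun n => (SimpleFunc.aestronglyMeasurable _))
    (fun n => ae_of_all _ (hg.norm_approxBounded_le (norm_nonneg F) n))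
    (hg.tendsto_approxBounded_ae hgF) z

theorem exists_inner_self_eq_quadForm [CompleteSpace H] (F : Lp ℂ ∞ μ) :
    ∃ A : H →L[ℂ] H, ∀ z, ⟪z, A z⟫ = hφ.quadForm F z :=
  have ⟨_, hT⟩ := hφ.exists_tendsto_inner_self_quadForm hcont F
  exists_inner_self_eq_of_tendsto hT (hφ.norm_quadForm_le hcont (Lp.ae_norm_le_norm F))

variable [CompleteSpace H]

def linfMap : Lp ℂ ∞ μ →ₗ[ℂ] (H →L[ℂ] H) where
  toFun F := (hφ.exists_inner_self_eq_quadForm hcont F).choose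
  map_add' F G := ContinuousLinearMap.ext_inner_self fun z => by
    have h F := (hφ.exists_inner_self_eq_quadForm hcont F).choose_spec z
    rw [add_apply, inner_add_right, h, h, h, hφ.quadForm_add hcont]
  map_smul' c F := ContinuousLinearMap.ext_inner_self fun z => by
    have h F := (hφ.exists_inner_self_eq_quadForm hcont F).choose_spec z
    rw [smul_apply, inner_smul_right, RingHom.id_apply, h, h, hφ.quadForm_smul hcont]

theorem inner_self_linfMap (F : Lp ℂ ∞ μ) (z : H) :
    ⟪z, hφ.linfMap hcont F z⟫ = hφ.quadForm F z :=
  (hφ.exists_inner_self_eq_quadForm hcont F).choose_spec z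

theorem inner_linfMap (F : Lp ℂ ∞ μ) (x y : H) :
    ⟪hφ.linfMap hcont F x, y⟫ = starRingEnd ℂ (polarization (hφ.quadForm F) y x) := by
  rw [← inner_conj_symm, ← polarization_inner_self]
  simp only [hφ.inner_self_linfMap hcont]

theorem isPositiveLinfMap_linfMap : IsPositiveLinfMap (hφ.linfMap hcont) := fun F hF z => by
  rw [← inner_conj_symm, inner_self_linfMap, Complex.star_def.symm, star_nonneg_iff]
  exact integral_nonneg_of_ae (hφ.measure_absolutelyContinuous hcont z hF)

theorem isNormalLinfMap_linfMap : IsNormalLinfMap (hφ.linfMap hcont) := by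
  intro f g C hb _ hlim x y
  simp only [inner_linfMap]
  exact (Complex.continuous_conj.tendsto _).comp <| tendsto_polarization (fun z =>
    hφ.tendsto_quadForm hcont (fun n => Lp.aestronglyMeasurable (f n))
      (fun n => (hb n).mono fun _ h => h.2) hlim z) y x

variable [IsFiniteMeasure μ]

theorem linfMap_indicatorConstLp (M : Set X) (hM : MeasurableSet M) :
    hφ.linfMap hcont (indicatorConstLp ∞ hM (measure_ne_top μ M) 1) = φ M hM :=
  ContinuousLinearMap.ext_inner_self fun z => by
    rw [inner_self_linfMap, hφ.quadForm_congr_ae hcont indicatorConstLp_coeFn,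
      hφ.quadForm_indicator hM]

theorem linfMap_one : hφ.linfMap hcont (Lp.const ∞ μ 1) = 1 := by
  rw [← indicatorConstLp_univ, linfMap_indicatorConstLp, hφ.2.1]

end IsPOVM

section NormalMaps

variable {X : Type*} [MeasurableSpace X] {μ : Measure X} {H : Type*} [NormedAddCommGroup H]
  [InnerProductSpace ℂ H]

theorem WOTTendsto.unique {T : ℕ → H →L[ℂ] H} {A B : H →L[ℂ] H} (hA : WOTTendsto T A)
    (hB : WOTTendsto T B) : A = B :=
  ContinuousLinearMap.ext fun x => ext_inner_right ℂ fun y => tendsto_nhds_unique (hA x y) (hB x y)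

theorem IsNormalLinfMap.apply_eq_of_im_eq_zero {ψ₁ ψ₂ : Lp ℂ ∞ μ →ₗ[ℂ] (H →L[ℂ] H)}
    (h₁ : IsNormalLinfMap ψ₁) (h₂ : IsNormalLinfMap ψ₂)
    (hs : ∀ s : SimpleFunc X ℂ, ψ₁ ((s.memLp_top μ).toLp s) = ψ₂ ((s.memLp_top μ).toLp s))
    {F : Lp ℂ ∞ μ} (hF : ∀ᵐ x ∂μ, (F x).im = 0) : ψ₁ F = ψ₂ F := by
  have hg := (Lp.aestronglyMeasurable F).stronglyMeasurable_mk
  have hFg := (Lp.aestronglyMeasurable F).ae_eq_mk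
  obtain ⟨s, hmono, hs_ae⟩ := SimpleFunc.exists_monotone_tendsto_ae (μ := μ)
    (Complex.measurable_re.comp hg.measurable) (C := ‖F‖) <| by
      filter_upwards [hFg, Lp.ae_norm_le_norm F] with x h₁ h₂
      exact (Complex.abs_re_le_norm _).trans (h₁ ▸ h₂)
  set sC : ℕ → SimpleFunc X ℂ := fun n => (s n).map (↑)
  set f : ℕ → Lp ℂ ∞ μ := fun n => ((sC n).memLp_top μ).toLp (sC n)
  have hf : ∀ᵐ x ∂μ, ∀ n, f n x = s n x :=
    ae_all_iff.mpr fun n => ((sC n).memLp_top μ).coeFn_toLp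
  have hb (n : ℕ) : ∀ᵐ x ∂μ, (f n x).im = 0 ∧ ‖f n x‖ ≤ ‖F‖ := by
    filter_upwards [hf, hs_ae] with x h₁ h₂
    simpa [h₁ n] using h₂.1 n
  have hm : ∀ᵐ x ∂μ, ∀ n, (f n x).re ≤ (f (n + 1) x).re := by
    filter_upwards [hf] with x h n
    simpa [h] using hmono n.le_succ x
  have hl : ∀ᵐ x ∂μ, Tendsto (fun n => f n x) atTop (𝓝 (F x)) := by
    filter_upwards [hf, hs_ae, hFg, hF] with x h₁ h₂ h₃ h₄
    have hFx : F x = ((F x).re : ℂ) := Complex.ext rfl (by simp [h₄])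
    simp only [h₁]
    rw [hFx, h₃]
    exact (Complex.continuous_ofReal.tendsto _).comp h₂.2
  refine (h₁ f F _ hb hm hl).unique ?_
  simpa only [f, hs] using h₂ f F _ hb hm hl

theorem IsNormalLinfMap.ext [IsFiniteMeasure μ] {ψ₁ ψ₂ : Lp ℂ ∞ μ →ₗ[ℂ] (H →L[ℂ] H)}
    (h₁ : IsNormalLinfMap ψ₁) (h₂ : IsNormalLinfMap ψ₂)
    (h : ∀ (M : Set X) (hM : MeasurableSet M),
      ψ₁ (indicatorConstLp ∞ hM (measure_ne_top μ M) 1) =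
        ψ₂ (indicatorConstLp ∞ hM (measure_ne_top μ M) 1)) :
    ψ₁ = ψ₂ := by
  have hs := LinearMap.eq_on_simpleFunc_of_eq_on_indicatorConstLp h
  refine LinearMap.ext fun F => ?_
  obtain ⟨F₁, F₂, hF₁, hF₂, rfl⟩ := Lp.exists_eq_add_I_smul F
  rw [map_add, map_smul, map_add, map_smul, h₁.apply_eq_of_im_eq_zero h₂ hs hF₁,
    h₁.apply_eq_of_im_eq_zero h₂ hs hF₂]

end NormalMaps

theorem stmt7 {X : Type u} [MeasurableSpace X] (μ : Measure X) [IsFiniteMeasure μ]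
    {H : Type v} [NormedAddCommGroup H] [InnerProductSpace ℂ H] [CompleteSpace H]
    (φ : ∀ M : Set X, MeasurableSet M → (H →L[ℂ] H)) (hφ : IsPOVM φ)
    (hcont : ∀ (M : Set X) (hM : MeasurableSet M), μ M = 0 → φ M hM = 0) :
    ∃! ψ : Lp ℂ ∞ μ →ₗ[ℂ] (H →L[ℂ] H),
      IsPositiveLinfMap ψ ∧
      ψ (Lp.const ∞ μ (1 : ℂ)) = 1 ∧
      IsNormalLinfMap ψ ∧
      ∀ (M : Set X) (hM : MeasurableSet M),
        ψ (indicatorConstLp ∞ hM (measure_ne_top μ M) (1 : ℂ)) = φ M hM := by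
  refine ⟨hφ.linfMap hcont, ⟨hφ.isPositiveLinfMap_linfMap hcont, hφ.linfMap_one hcont,
    hφ.isNormalLinfMap_linfMap hcont, hφ.linfMap_indicatorConstLp hcont⟩, ?_⟩
  rintro ψ ⟨-, -, hψ, hψφ⟩
  exact hψ.ext (hφ.isNormalLinfMap_linfMap hcont) fun M hM =>
    (hψφ M hM).trans (hφ.linfMap_indicatorConstLp hcont M hM).symm

end
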